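/- Let B be any real 8×8 matrix with 8×8 DCT B̂_8 = T_8 · B · T_8ᵀ, and for r, c ∈ {0,1} let B^{(r,c)} = E_r · B · E_cᵀ be its four 4×4 sub-blocks. Define Û_4 = T_8 · U_4 · T_4ᵀ. Then for all r, c ∈ {0,1}: Û_4 · ((T_4 · E_r · T_8ᵀ) · B̂_8 · (T_4 · E_c · T_8ᵀ)ᵀ) · Û_4ᵀ = T_8 · (U_4 · B^{(r,c)} · U_4ᵀ) · T_8ᵀ. That is, first applying the sub-block conversion to the 8×8 DCT block and then the DCT-domain upsampling matrix Û_4 yields exactly the 8×8 DCT of the nearest-neighbor upsampled 4×4 pixel sub-block, entirely in the DCT domain. -/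

import Mathlib

open Matrix

/-- The orthonormal type-II DCT basis matrix `T_N`. -/
noncomputable def dctMatrix (N : ℕ) : Matrix (Fin N) (Fin N) ℝ :=
  fun i j => Real.sqrt (2 / N) * (if (i : ℕ) = 0 then 1 / Real.sqrt 2 else 1) *
    Real.cos ((2 * (j : ℕ) + 1) * (i : ℕ) * Real.pi / (2 * N))

/-- The nearest-neighbor upsampling matrix `U_N ∈ ℝ^{2N × N}`. -/
def upMatrix (N : ℕ) : Matrix (Fin (2 * N)) (Fin N) ℝ :=
  fun i j => if (j : ℕ) = (i : ℕ) / 2 then 1 else 0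

/-- The row-selection matrices `E_r ∈ ℝ^{4×8}` for `r ∈ {0,1}`:
`(E_r)_{i,j} = 1` iff `j = i + 4r`. -/
def selMatrix (r : Fin 2) : Matrix (Fin 4) (Fin 8) ℝ :=
  fun i j => if (j : ℕ) = (i : ℕ) + 4 * (r : ℕ) then 1 else 0

/-!
The DCT matrices are orthogonal, so in the composite every factor `T_4ᵀ T_4` and `T_8ᵀ T_8`
cancels and what is left is the DCT of `U_4 E_r B E_cᵀ U_4ᵀ`. For orthogonality, the
product-to-sum formula turns `(T_Nᵀ T_N)_{jk}` into the cosine sums `∑_{i<N} cos (i m π / N)`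
with `m = j - k` and `m = j + k + 1`; multiplying by `2 sin (m π / 2N)` makes such a sum
telescope, which gives `1` for odd `m` and `0` for even `m ≢ 0 (mod 2N)`.
-/

open Real Finset

theorem two_mul_sin_half_mul_sum_range_cos_sub_half (θ : ℝ) (N : ℕ) :
    2 * sin (θ / 2) * (∑ i ∈ range N, cos (i * θ) - 1 / 2) = sin ((N - 1 / 2) * θ) := by
  induction N with
  | zero =>
    simp only [range_zero, sum_empty, CharP.cast_eq_zero]
    rw [show (0 - 1 / 2) * θ = -(θ / 2) by ring, sin_neg]
    ring
  | succ N ih =>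
    have telescope :
        2 * sin (θ / 2) * cos (N * θ) = sin ((N + 1 / 2) * θ) - sin ((N - 1 / 2) * θ) := by
      rw [two_mul_sin_mul_cos, ← neg_neg (θ / 2 - N * θ), sin_neg]
      ring_nf
    rw [sum_range_succ, Nat.cast_succ, add_sub_right_comm, mul_add, ih, telescope]
    ring_nf

theorem sum_range_cos_int_mul_pi_div {N : ℕ} (hN : N ≠ 0) {m : ℤ} (hm : ¬ (2 * N : ℤ) ∣ m) :
    ∑ i ∈ range N, cos (i * (m * π / N)) = (1 - (-1) ^ m) / 2 := by
  have hN' : (N : ℝ) ≠ 0 := Nat.cast_ne_zero.mpr hN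
  have hsin : sin (m * π / N / 2) ≠ 0 := by
    rw [Ne, sin_eq_zero_iff]
    rintro ⟨n, hn⟩
    refine hm ⟨n, ?_⟩
    field_simp at hn
    exact_mod_cast (by linear_combination -hn : (m : ℝ) = 2 * N * n)
  have key := two_mul_sin_half_mul_sum_range_cos_sub_half (m * π / N) N
  rw [show (N - 1 / 2) * (m * π / N) = m * π - m * π / N / 2 by field_simp,
    sin_int_mul_pi_sub] at key
  apply mul_left_cancel₀ hsin
  linear_combination key / 2

theorem dctMatrix_mul_dctMatrix_apply {N : ℕ} (i j k : Fin N) :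
    dctMatrix N i j * dctMatrix N i k =
      (if (i : ℕ) = 0 then 1 / 2 else 1) *
        (cos (i * ((j - k) * π / N)) + cos (i * ((j + k + 1) * π / N))) / N := by
  have hN : (N : ℝ) ≠ 0 := Nat.cast_ne_zero.mpr (Fin.pos i).ne'
  have hsqrt : √(2 / N) * √(2 / N) = 2 / N := Real.mul_self_sqrt (by positivity)
  have hweight : (if (i : ℕ) = 0 then 1 / √2 else 1) * (if (i : ℕ) = 0 then 1 / √2 else 1) =
      (if (i : ℕ) = 0 then 1 / 2 else 1 : ℝ) := by
    split_ifs
    · rw [div_mul_div_comm, one_mul, Real.mul_self_sqrt zero_le_two]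
    · rw [one_mul]
  rw [show (i : ℝ) * ((j - k) * π / N) =
        (2 * j + 1) * i * π / (2 * N) - (2 * k + 1) * i * π / (2 * N) by field_simp; ring,
    show (i : ℝ) * ((j + k + 1) * π / N) =
        (2 * j + 1) * i * π / (2 * N) + (2 * k + 1) * i * π / (2 * N) by field_simp; ring,
    ← two_mul_cos_mul_cos]
  simp only [dctMatrix]
  rw [mul_mul_mul_comm, mul_mul_mul_comm (√(2 / N)), hsqrt, hweight]
  field_simp

theorem sum_range_ite_zero_half_mul {N : ℕ} (hN : N ≠ 0) (f : ℕ → ℝ) :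
    ∑ i ∈ range N, (if i = 0 then 1 / 2 else 1) * f i = ∑ i ∈ range N, f i - f 0 / 2 := by
  obtain ⟨n, rfl⟩ := Nat.exists_eq_succ_of_ne_zero hN
  simp only [sum_range_succ', Nat.succ_ne_zero, if_false, if_true, one_mul]
  ring

theorem transpose_dctMatrix_mul_dctMatrix_apply {N : ℕ} (j k : Fin N) :
    ((dctMatrix N)ᵀ * dctMatrix N) j k =
      (∑ i ∈ range N, cos (i * ((j - k) * π / N)) +
        ∑ i ∈ range N, cos (i * ((j + k + 1) * π / N)) - 1) / N := by
  simp only [mul_apply, transpose_apply, dctMatrix_mul_dctMatrix_apply]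
  rw [Fin.sum_univ_eq_sum_range (fun i => (if i = 0 then 1 / 2 else 1) *
      (cos (i * ((j - k) * π / N)) + cos (i * ((j + k + 1) * π / N))) / N) N,
    ← sum_div, sum_range_ite_zero_half_mul (Fin.pos j).ne', ← sum_add_distrib]
  simp only [Nat.cast_zero, zero_mul, cos_zero]
  ring

theorem transpose_dctMatrix_mul_dctMatrix (N : ℕ) : (dctMatrix N)ᵀ * dctMatrix N = 1 := by
  ext j k
  have hN : N ≠ 0 := (Fin.pos j).ne'
  have hj := j.isLt
  have hk := k.isLt
  have not_dvd {m : ℤ} (h0 : m ≠ 0) (hlt : |m| < 2 * N) : ¬ (2 * N : ℤ) ∣ m :=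
    fun h => h0 (Int.eq_zero_of_abs_lt_dvd h hlt)
  have sum_cos_add : ∑ i ∈ range N, cos (i * ((j + k + 1) * π / N)) =
      (1 - (-1) ^ ((j + k + 1 : ℕ) : ℤ)) / 2 := by
    rw [← sum_range_cos_int_mul_pi_div hN]
    · push_cast; rfl
    · exact not_dvd (by omega) (by rw [abs_lt]; omega)
  rw [transpose_dctMatrix_mul_dctMatrix_apply, one_apply, sum_cos_add]
  split_ifs with hjk
  · subst hjk
    have hodd : Odd ((j + j + 1 : ℕ) : ℤ) := ⟨j, by push_cast; ring⟩
    simp only [sub_self, zero_mul, zero_div, mul_zero, cos_zero, sum_const, card_range,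
      nsmul_eq_mul, mul_one, hodd.neg_one_zpow]
    field_simp
    ring
  · have sum_cos_sub : ∑ i ∈ range N, cos (i * ((j - k) * π / N)) =
        (1 - (-1) ^ ((j : ℤ) - k)) / 2 := by
      rw [← sum_range_cos_int_mul_pi_div hN]
      · push_cast; rfl
      · exact not_dvd (by omega) (by rw [abs_lt]; omega)
    have hodd : Odd ((j + k + 1 : ℕ) - ((j : ℤ) - k)) := ⟨k, by push_cast; ring⟩
    rw [sum_cos_sub, ← sub_add_cancel ((j + k + 1 : ℕ) : ℤ) ((j : ℤ) - k),
      zpow_add₀ (by norm_num), hodd.neg_one_zpow]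
    ring

/-- Applying the sub-block conversion to the 8×8 DCT block `B̂_8 = T_8 * B * T_8ᵀ` and then
the DCT-domain upsampling matrix `Û_4 = T_8 * U_4 * T_4ᵀ` yields exactly the 8×8 DCT of
the nearest-neighbor upsampled 4×4 pixel sub-block `B^{(r,c)} = E_r * B * E_cᵀ`. -/
theorem dct_domain_subblock_upsampling (B : Matrix (Fin 8) (Fin 8) ℝ) (r c : Fin 2) :
    (dctMatrix 8 * upMatrix 4 * (dctMatrix 4)ᵀ) *
        ((dctMatrix 4 * selMatrix r * (dctMatrix 8)ᵀ) * (dctMatrix 8 * B * (dctMatrix 8)ᵀ) *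
          (dctMatrix 4 * selMatrix c * (dctMatrix 8)ᵀ)ᵀ) *
        (dctMatrix 8 * upMatrix 4 * (dctMatrix 4)ᵀ)ᵀ =
      dctMatrix 8 * (upMatrix 4 * (selMatrix r * B * (selMatrix c)ᵀ) * (upMatrix 4)ᵀ) *
        (dctMatrix 8)ᵀ := by
  simp only [Matrix.transpose_mul, Matrix.transpose_transpose, Matrix.mul_assoc]
  simp only [← Matrix.mul_assoc (dctMatrix 4)ᵀ (dctMatrix 4),
    ← Matrix.mul_assoc (dctMatrix 8)ᵀ (dctMatrix 8), transpose_dctMatrix_mul_dctMatrix,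
    Matrix.one_mul]
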